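/- arXiv:2206.09292 — 2 statements merged into one kernel-verified Lean document; each statement's English description precedes it below -/
import Mathlib

section
/- Define the initial cylinders of the Lozi map by O_i = ⋂_{m=1}^{n} f^{-(m-1)}(M_{i_m}) for a word i ∈ {+,−}ⁿ, where M₊ = {x > 0} × ℝ and M₋ = {x < 0} × ℝ intersected with the interior of a convex invariant set M. Then every initial cylinder is convex. -/
/-!
On each of the half-planes `{x > 0}` and `{x < 0}` the Lozi map agrees with an affine map. A cylinder
of length `n + 1` is therefore `M_{i₁} ∩ g⁻¹(C)`, where `g` is the affine branch of `f` on `M_{i₁}`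
and `C` is a cylinder of length `n`; by induction on `n` it is an intersection of convex sets with
affine preimages of convex sets.
-/

open Set

theorem Set.iInter_fin_succ_iterate_preimage {α : Type*} (f : α → α) {n : ℕ}
    (B : Fin (n + 1) → Set α) :
    ⋂ m : Fin (n + 1), f^[(m : ℕ)] ⁻¹' B m =
      B 0 ∩ f ⁻¹' ⋂ m : Fin n, f^[(m : ℕ)] ⁻¹' B m.succ := by
  ext p
  simp only [mem_iInter, mem_inter_iff, mem_preimage, Fin.forall_fin_succ, Fin.val_zero,
    Function.iterate_zero, id_eq, Fin.val_succ, Function.iterate_succ_apply]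

theorem Convex.iInter_iterate_preimage_of_eqOn_affine {ι E : Type*} [AddCommGroup E]
    [Module ℝ E] {f : E → E} {A : ι → Set E} (hA : ∀ c, Convex ℝ (A c))
    (g : ι → E →ᵃ[ℝ] E) (hfg : ∀ c, EqOn f (g c) (A c)) (n : ℕ) (i : Fin n → ι) :
    Convex ℝ (⋂ m : Fin n, f^[(m : ℕ)] ⁻¹' A (i m)) := by
  induction n with
  | zero => simpa using convex_univ
  | succ n ih =>
    rw [iInter_fin_succ_iterate_preimage, (hfg (i 0)).inter_preimage_eq]
    exact (hA (i 0)).inter ((ih fun m => i m.succ).affine_preimage (g (i 0)))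

def lozi (a b : ℝ) (p : ℝ × ℝ) : ℝ × ℝ := (1 + p.2 - a * |p.1|, b * p.1)

/-- The affine map `(x, y) ↦ (1 + y - a σ x, b x)`, which is `lozi a b` where `x` has sign `σ`. -/
noncomputable def loziBranch (a b σ : ℝ) : (ℝ × ℝ) →ᵃ[ℝ] ℝ × ℝ :=
  (((LinearMap.snd ℝ ℝ ℝ - (a * σ) • LinearMap.fst ℝ ℝ ℝ).prod
    (b • LinearMap.fst ℝ ℝ ℝ)).toAffineMap + AffineMap.const ℝ (ℝ × ℝ) ((1, 0) : ℝ × ℝ))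

theorem loziBranch_apply (a b σ : ℝ) (p : ℝ × ℝ) :
    loziBranch a b σ p = (1 + p.2 - a * σ * p.1, b * p.1) := by
  simp [loziBranch, mul_assoc, add_comm, sub_add_eq_add_sub]

theorem eqOn_lozi_loziBranch_one (a b : ℝ) : EqOn (lozi a b) (loziBranch a b 1) {p | 0 < p.1} :=
  fun p hp => by
    rw [lozi, loziBranch_apply, abs_of_pos (show 0 < p.1 from hp), mul_one]

theorem eqOn_lozi_loziBranch_neg_one (a b : ℝ) :
    EqOn (lozi a b) (loziBranch a b (-1)) {p | p.1 < 0} :=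
  fun p hp => by
    simp [lozi, loziBranch_apply, abs_of_neg (show p.1 < 0 from hp)]

theorem lozi_initial_cylinders_convex_general (a b : ℝ)
    (f : ℝ × ℝ → ℝ × ℝ) (hf : ∀ x y, f (x, y) = (1 + y - a * |x|, b * x))
    (M : Set (ℝ × ℝ)) (hM : Convex ℝ M)
    (Mplus Mminus : Set (ℝ × ℝ))
    (hMp : Mplus = {p : ℝ × ℝ | 0 < p.1} ∩ interior M)
    (hMm : Mminus = {p : ℝ × ℝ | p.1 < 0} ∩ interior M)
    (n : ℕ) (i : Fin n → Bool) :
    Convex ℝ (⋂ m : Fin n, (f^[(m : ℕ)]) ⁻¹' (if i m then Mplus else Mminus)) := by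
  obtain rfl : f = lozi a b := funext fun p => hf p.1 p.2
  refine Convex.iInter_iterate_preimage_of_eqOn_affine (A := fun c => if c then Mplus else Mminus)
    (fun c => ?_) (fun c => if c then loziBranch a b 1 else loziBranch a b (-1)) (fun c => ?_) n i
  all_goals subst hMp hMm; cases c
  · exact (convex_halfSpace_lt (LinearMap.fst ℝ ℝ ℝ).isLinear 0).inter hM.interior
  · exact (convex_halfSpace_gt (LinearMap.fst ℝ ℝ ℝ).isLinear 0).inter hM.interior
  · exact (eqOn_lozi_loziBranch_neg_one a b).mono inter_subset_left
  · exact (eqOn_lozi_loziBranch_one a b).mono inter_subset_left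

theorem lozi_initial_cylinders_convex (a b : ℝ) (hb : b ≠ 0)
    (f : ℝ × ℝ → ℝ × ℝ) (hf : ∀ x y, f (x, y) = (1 + y - a * |x|, b * x))
    (M : Set (ℝ × ℝ)) (hM : Convex ℝ M) (hinv : f '' M ⊆ M)
    (Mplus Mminus : Set (ℝ × ℝ))
    (hMp : Mplus = {p : ℝ × ℝ | 0 < p.1} ∩ interior M)
    (hMm : Mminus = {p : ℝ × ℝ | p.1 < 0} ∩ interior M)
    (n : ℕ) (i : Fin n → Bool) :
    Convex ℝ (⋂ m : Fin n, (f^[(m : ℕ)]) ⁻¹' (if i m then Mplus else Mminus)) :=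
  lozi_initial_cylinders_convex_general a b f hf M hM Mplus Mminus hMp hMm n i
end

section
/- For the Lozi map with a > 1 + b and b > 0, vectors in the unstable cone are uniformly expanded: there exist c > 0 small and λ > 1 such that for all v = (ξ,η) with ξ ≥ c|η|, ‖Df_± v‖ ≥ λ‖v‖, where Df_± = [[∓a,1],[b,0]]. -/
/-!
Put `δ = (a - 1) / 2` and `c = 1 / δ`, so that the cone is `|η| ≤ δ ξ`. On it the first coordinate
dominates, `ξ² + η² ≤ (1 + δ²) ξ²`, while `|∓a ξ + η| ≥ (a - δ) ξ`, so both images have squared norm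
at least `((a - δ)² + b²) ξ²`. The ratio of the two constants exceeds `1` because
`(a - δ)² + b² - (1 + δ²) = a - 1 + b²`.
-/

lemma sq_add_sq_le_of_abs_le_mul {δ ξ η : ℝ} (hη : |η| ≤ δ * ξ) :
    ξ ^ 2 + η ^ 2 ≤ (1 + δ ^ 2) * ξ ^ 2 := by
  have h : η ^ 2 ≤ (δ * ξ) ^ 2 := sq_le_sq' (by linarith [neg_abs_le η]) (le_abs_self η |>.trans hη)
  nlinarith

lemma sub_sq_mul_sq_le_mul_add_sq {α δ ξ η : ℝ} (hξ : 0 ≤ ξ) (hη : |η| ≤ δ * ξ)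
    (hδ : δ ≤ |α|) : (|α| - δ) ^ 2 * ξ ^ 2 ≤ (α * ξ + η) ^ 2 := by
  have hlow : (|α| - δ) * ξ ≤ |α * ξ + η| := by
    have := abs_sub_abs_le_abs_add (α * ξ) η
    rw [abs_mul, abs_of_nonneg hξ] at this
    linarith
  rw [← mul_pow, ← sq_abs (α * ξ + η)]
  exact pow_le_pow_left₀ (mul_nonneg (sub_nonneg.2 hδ) hξ) hlow 2

lemma sqrt_div_mul_sqrt_le_sqrt {N D t x y : ℝ} (hN : 0 ≤ N) (hD : 0 < D)
    (hx : x ≤ D * t) (hy : N * t ≤ y) : √(N / D) * √x ≤ √y := by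
  rw [← Real.sqrt_mul (div_nonneg hN hD.le)]
  refine Real.sqrt_le_sqrt ?_
  calc N / D * x ≤ N / D * (D * t) := mul_le_mul_of_nonneg_left hx (div_nonneg hN hD.le)
    _ = N * t := by field_simp
    _ ≤ y := hy

theorem lozi_unstable_cone_uniform_expansion
    (a b : ℝ) (hb : 0 < b) (ha : 1 + b < a) :
    ∃ c : ℝ, 0 < c ∧ ∃ lam : ℝ, 1 < lam ∧
      ∀ ξ η : ℝ, c * |η| ≤ ξ →
        lam * Real.sqrt (ξ ^ 2 + η ^ 2) ≤ Real.sqrt ((-a * ξ + η) ^ 2 + (b * ξ) ^ 2) ∧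
        lam * Real.sqrt (ξ ^ 2 + η ^ 2) ≤ Real.sqrt ((a * ξ + η) ^ 2 + (b * ξ) ^ 2) := by
  set δ := (a - 1) / 2 with hδ_def
  have hδ : 0 < δ := by rw [hδ_def]; linarith
  have hδa : δ ≤ a := by rw [hδ_def]; linarith
  have hD : 0 < 1 + δ ^ 2 := by positivity
  have hDN : 1 + δ ^ 2 < (a - δ) ^ 2 + b ^ 2 := by rw [hδ_def]; nlinarith
  refine ⟨1 / δ, by positivity, √(((a - δ) ^ 2 + b ^ 2) / (1 + δ ^ 2)), ?_, ?_⟩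
  · rw [Real.lt_sqrt zero_le_one, one_pow]
    exact (one_lt_div hD).2 hDN
  intro ξ η hcone
  have hξ : 0 ≤ ξ := (by positivity : 0 ≤ 1 / δ * |η|).trans hcone
  have hη : |η| ≤ δ * ξ := by
    calc |η| = δ * (1 / δ * |η|) := by field_simp
      _ ≤ δ * ξ := mul_le_mul_of_nonneg_left hcone hδ.le
  have hexpand : ∀ α : ℝ, |α| = a →
      ((a - δ) ^ 2 + b ^ 2) * ξ ^ 2 ≤ (α * ξ + η) ^ 2 + (b * ξ) ^ 2 := fun α hα => by
    have := sub_sq_mul_sq_le_mul_add_sq hξ hη (hα ▸ hδa)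
    rw [hα] at this
    rw [add_mul, mul_pow b]
    exact add_le_add_left this _
  exact ⟨sqrt_div_mul_sqrt_le_sqrt (by positivity) hD (sq_add_sq_le_of_abs_le_mul hη)
      (hexpand (-a) (by rw [abs_neg, abs_of_pos (by linarith)])),
    sqrt_div_mul_sqrt_le_sqrt (by positivity) hD (sq_add_sq_le_of_abs_le_mul hη)
      (hexpand a (abs_of_pos (by linarith)))⟩
end
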